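/- Optimality among symmetric tests (Lemma 1): with Q₀ := ∑_{σ ∈ S} P_{0;σ} and Q₁ := ∑_{σ ∈ S} P_{1;σ}, assume Q₁ ≪ Q₀ and let ℓ := Q₁.rnDeriv Q₀. For t ∈ ℝ≥0∞ and γ ∈ [0,1] define φ* by φ*(x) = 1 if ℓ(x) > t, γ if ℓ(x) = t, 0 if ℓ(x) < t. Then for every symmetric test ψ (i.e. ψ(x ∘ τ) = ψ(x) for all x and all τ) with P_F(ψ) ≤ P_F(φ*), one has P_M(ψ) ≥ P_M(φ*). -/

import Mathlib

open MeasureTheory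
open scoped ENNReal BigOperators

noncomputable def labelSet {ι : Type*} {n : ℕ} (ν : Fin n → ι) : Finset (Fin n → ι) :=
  letI := Classical.decEq (Fin n → ι)
  Finset.univ.image (fun π : Equiv.Perm (Fin n) => ν ∘ ⇑π)

noncomputable def prodM {X ι : Type*} [MeasurableSpace X] (μ : ι → Measure X) {n : ℕ}
    (σ : Fin n → ι) : Measure (Fin n → X) :=
  Measure.pi fun j => μ (σ j)

noncomputable def PF {X ι : Type*} [MeasurableSpace X] (μ₀ : ι → Measure X) {n : ℕ}
    (ν : Fin n → ι) (ψ : (Fin n → X) → ℝ) : ℝ :=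
  ⨆ σ ∈ labelSet ν, ∫ x, ψ x ∂(prodM μ₀ σ)

noncomputable def PM {X ι : Type*} [MeasurableSpace X] (μ₁ : ι → Measure X) {n : ℕ}
    (ν : Fin n → ι) (ψ : (Fin n → X) → ℝ) : ℝ :=
  ⨆ σ ∈ labelSet ν, ∫ x, (1 - ψ x) ∂(prodM μ₁ σ)

noncomputable def mixM {X ι : Type*} [MeasurableSpace X] (μ : ι → Measure X) {n : ℕ}
    (ν : Fin n → ι) : Measure (Fin n → X) :=
  ∑ σ ∈ labelSet ν, prodM μ σ

/-!
Permuting the coordinates permutes the labelings in `S`, so it leaves `Q₀` and `Q₁` invariant;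
hence `ℓ`, and with it `φ*`, is permutation invariant `Q₀`-a.e. A test that is invariant in this
sense has the same integral under every `P_{i;σ}`, `σ ∈ S`, so its worst-case errors are its errors
under `P_{i;ν}`, and `|S|` times these are its integrals against `Q_i`. The claim thus reduces to
the Neyman–Pearson lemma for the pair `Q₀, Q₁`: since `(ℓ - t) (φ* - ψ) ≥ 0`,
`∫ (φ* - ψ) dQ₁ ≥ t ∫ (φ* - ψ) dQ₀ ≥ 0`.
-/

section Tests

variable {α : Type*}

noncomputable def thresholdTest (t : ℝ≥0∞) (γ : ℝ) (r : ℝ≥0∞) : ℝ :=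
  if t < r then 1 else if r = t then γ else 0

lemma measurable_thresholdTest (t : ℝ≥0∞) (γ : ℝ) : Measurable (thresholdTest t γ) :=
  Measurable.ite measurableSet_Ioi measurable_const
    (Measurable.ite (measurableSet_singleton t) measurable_const measurable_const)

lemma eq_thresholdTest_comp {ℓ : α → ℝ≥0∞} {t : ℝ≥0∞} {γ : ℝ} {φ : α → ℝ}
    (hφ1 : ∀ x, t < ℓ x → φ x = 1) (hφγ : ∀ x, ℓ x = t → φ x = γ)
    (hφ0 : ∀ x, ℓ x < t → φ x = 0) : φ = thresholdTest t γ ∘ ℓ := by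
  funext x
  simp only [Function.comp_apply, thresholdTest]
  rcases lt_trichotomy (ℓ x) t with h | h | h
  · rw [hφ0 x h, if_neg (not_lt.2 h.le), if_neg h.ne]
  · rw [hφγ x h, if_neg h.not_gt, if_pos h]
  · rw [hφ1 x h, if_pos h]

variable [MeasurableSpace α]

def IsTest (ψ : α → ℝ) : Prop :=
  Measurable ψ ∧ ∀ x, ψ x ∈ Set.Icc 0 1

lemma IsTest.integrable {ψ : α → ℝ} (hψ : IsTest ψ) (μ : Measure α) [IsFiniteMeasure μ] :
    Integrable ψ μ :=
  (integrable_const 1).mono' hψ.1.aestronglyMeasurable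
    (ae_of_all _ fun x => by rw [Real.norm_of_nonneg (hψ.2 x).1]; exact (hψ.2 x).2)

lemma isTest_thresholdTest_comp {ℓ : α → ℝ≥0∞} (hℓ : Measurable ℓ) (t : ℝ≥0∞) {γ : ℝ}
    (hγ : γ ∈ Set.Icc 0 1) : IsTest (thresholdTest t γ ∘ ℓ) := by
  refine ⟨(measurable_thresholdTest t γ).comp hℓ, fun x => ?_⟩
  simp only [Function.comp_apply, thresholdTest]
  split_ifs <;> simp [hγ]

variable {μ ν : Measure α} [IsFiniteMeasure μ] [IsFiniteMeasure ν] {t : ℝ≥0∞} {φ ψ : α → ℝ}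

lemma mul_integral_sub_le_of_likelihoodRatio (hνμ : ν ≪ μ) (hφ : IsTest φ) (hψ : IsTest ψ)
    (hφ1 : ∀ x, t < ν.rnDeriv μ x → φ x = 1) (hφ0 : ∀ x, ν.rnDeriv μ x < t → φ x = 0)
    (ht : t ≠ ∞) :
    t.toReal * ∫ x, (φ x - ψ x) ∂μ ≤ ∫ x, (φ x - ψ x) ∂ν := by
  have hint : Integrable (fun x => φ x - ψ x) ν := (hφ.integrable ν).sub (hψ.integrable ν)
  have hpointwise : ∀ᵐ x ∂μ,
      t.toReal * (φ x - ψ x) ≤ (ν.rnDeriv μ x).toReal * (φ x - ψ x) := by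
    filter_upwards [Measure.rnDeriv_lt_top ν μ] with x hx
    rcases lt_trichotomy (ν.rnDeriv μ x) t with h | h | h
    · refine mul_le_mul_of_nonpos_right (ENNReal.toReal_mono ht h.le) ?_
      linarith [hφ0 x h, (hψ.2 x).1]
    · rw [h]
    · refine mul_le_mul_of_nonneg_right (ENNReal.toReal_mono hx.ne h.le) ?_
      linarith [hφ1 x h, (hψ.2 x).2]
  calc t.toReal * ∫ x, (φ x - ψ x) ∂μ = ∫ x, t.toReal * (φ x - ψ x) ∂μ :=
        (integral_const_mul _ _).symm
    _ ≤ ∫ x, (ν.rnDeriv μ x).toReal * (φ x - ψ x) ∂μ :=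
        integral_mono_ae (((hφ.integrable μ).sub (hψ.integrable μ)).const_mul _)
          ((integrable_toReal_rnDeriv_mul_iff hνμ).2 hint) hpointwise
    _ = ∫ x, (φ x - ψ x) ∂ν := integral_toReal_rnDeriv_mul hνμ

theorem integral_le_integral_of_likelihoodRatio (hνμ : ν ≪ μ) (hφ : IsTest φ) (hψ : IsTest ψ)
    (hφ1 : ∀ x, t < ν.rnDeriv μ x → φ x = 1) (hφ0 : ∀ x, ν.rnDeriv μ x < t → φ x = 0)
    (h : ∫ x, ψ x ∂μ ≤ ∫ x, φ x ∂μ) :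
    ∫ x, ψ x ∂ν ≤ ∫ x, φ x ∂ν := by
  rcases eq_or_ne t ∞ with rfl | ht
  · -- the likelihood ratio is finite `μ`-a.e., so `φ` and then `ψ` vanish `μ`-a.e.
    have hφ_ae : φ =ᵐ[μ] 0 := by
      filter_upwards [Measure.rnDeriv_lt_top ν μ] with x hx using hφ0 x hx
    have hψ_ae : ψ =ᵐ[μ] 0 := by
      refine (integral_eq_zero_iff_of_nonneg (fun x => (hψ.2 x).1) (hψ.integrable μ)).1 ?_
      exact le_antisymm (h.trans_eq (by simp [integral_congr_ae hφ_ae]))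
        (integral_nonneg fun x => (hψ.2 x).1)
    simp [integral_congr_ae (hνμ.ae_le hφ_ae), integral_congr_ae (hνμ.ae_le hψ_ae)]
  · have h_sub := mul_integral_sub_le_of_likelihoodRatio hνμ hφ hψ hφ1 hφ0 ht
    rw [integral_sub (hφ.integrable μ) (hψ.integrable μ),
      integral_sub (hφ.integrable ν) (hψ.integrable ν)] at h_sub
    nlinarith [ENNReal.toReal_nonneg (a := t)]

end Tests

lemma Real.biSup_finset_eq_of_forall_eq {β : Type*} {s : Finset β} {f : β → ℝ} {c : ℝ}
    (hs : s.Nonempty) (hc : 0 ≤ c) (hf : ∀ b ∈ s, f b = c) :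
    ⨆ b ∈ s, f b = c := by
  -- `⨆ _ : b ∈ s, f b` is `sSup ∅ = 0` for `b ∉ s`, hence the sign condition on `c`.
  have hle : ∀ b, ⨆ _ : b ∈ s, f b ≤ c := fun b => Real.iSup_le (fun hb => (hf b hb).le) hc
  obtain ⟨b, hb⟩ := hs
  refine le_antisymm (Real.iSup_le hle hc) ?_
  refine le_ciSup_of_le ⟨c, Set.forall_mem_range.2 hle⟩ b ?_
  rw [ciSup_pos hb, hf b hb]

lemma MeasurableEmbedding.rnDeriv_comp_ae_eq_of_map_eq {α : Type*} [MeasurableSpace α]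
    {f : α → α} (hf : MeasurableEmbedding f) {μ ν : Measure α} [SigmaFinite μ] [SigmaFinite ν]
    (hμ : μ.map f = μ) (hν : ν.map f = ν) :
    (fun x => μ.rnDeriv ν (f x)) =ᵐ[ν] μ.rnDeriv ν := by
  simpa only [hμ, hν] using hf.rnDeriv_map μ ν

section Symmetry

variable {X ι : Type*} [MeasurableSpace X] {n : ℕ}

noncomputable def permCoords (X : Type*) [MeasurableSpace X] (π : Equiv.Perm (Fin n)) :
    (Fin n → X) ≃ᵐ (Fin n → X) :=
  MeasurableEquiv.piCongrLeft (fun _ => X) π.symm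

@[simp]
lemma permCoords_apply (π : Equiv.Perm (Fin n)) (x : Fin n → X) : permCoords X π x = x ∘ π := by
  funext j
  simpa [permCoords] using
    MeasurableEquiv.piCongrLeft_apply_apply (β := fun _ : Fin n => X) π.symm x (π j)

def AEPermInvariant {β : Type*} (Q : Measure (Fin n → X)) (g : (Fin n → X) → β) : Prop :=
  ∀ π : Equiv.Perm (Fin n), ∀ᵐ x ∂Q, g (x ∘ π) = g x

lemma mem_labelSet_iff {ν σ : Fin n → ι} :
    σ ∈ labelSet ν ↔ ∃ π : Equiv.Perm (Fin n), σ = ν ∘ π := by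
  classical
  simp [labelSet, eq_comm]

lemma self_mem_labelSet (ν : Fin n → ι) : ν ∈ labelSet ν :=
  mem_labelSet_iff.2 ⟨Equiv.refl _, rfl⟩

lemma comp_perm_mem_labelSet {ν σ : Fin n → ι} (hσ : σ ∈ labelSet ν) (π : Equiv.Perm (Fin n)) :
    σ ∘ π ∈ labelSet ν := by
  obtain ⟨ρ, rfl⟩ := mem_labelSet_iff.1 hσ
  exact mem_labelSet_iff.2 ⟨π.trans ρ, rfl⟩

variable (μ : ι → Measure X)

instance [∀ i, IsProbabilityMeasure (μ i)] (σ : Fin n → ι) :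
    IsProbabilityMeasure (prodM μ σ) :=
  inferInstanceAs (IsProbabilityMeasure (Measure.pi fun j => μ (σ j)))

instance [∀ i, IsProbabilityMeasure (μ i)] (ν : Fin n → ι) : IsFiniteMeasure (mixM μ ν) := by
  unfold mixM; infer_instance

lemma prodM_ac_mixM {ν σ : Fin n → ι} (hσ : σ ∈ labelSet ν) : prodM μ σ ≪ mixM μ ν :=
  Measure.absolutelyContinuous_of_le (Finset.single_le_sum (fun _ _ => Measure.zero_le _) hσ)

lemma map_permCoords_prodM [∀ i, SigmaFinite (μ i)] (σ : Fin n → ι) (π : Equiv.Perm (Fin n)) :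
    (prodM μ σ).map (permCoords X π) = prodM μ (σ ∘ π) := by
  have h := (measurePreserving_piCongrLeft (α := fun _ => X) (fun j => μ ((σ ∘ π) j)) π.symm).map_eq
  simpa [prodM, permCoords] using h

lemma map_permCoords_mixM [∀ i, SigmaFinite (μ i)] (ν : Fin n → ι) (π : Equiv.Perm (Fin n)) :
    (mixM μ ν).map (permCoords X π) = mixM μ ν := by
  rw [mixM, Measure.map_finset_sum (permCoords X π).measurable.aemeasurable]
  simp only [map_permCoords_prodM]
  exact Finset.sum_nbij' (· ∘ π) (· ∘ π.symm) (fun σ hσ => comp_perm_mem_labelSet hσ π)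
    (fun σ hσ => comp_perm_mem_labelSet hσ π.symm) (fun σ _ => by ext; simp)
    (fun σ _ => by ext; simp) (fun σ _ => rfl)

lemma integral_prodM_eq_of_mem_labelSet [∀ i, SigmaFinite (μ i)] {ν σ : Fin n → ι}
    {g : (Fin n → X) → ℝ} (hg : AEPermInvariant (mixM μ ν) g) (hσ : σ ∈ labelSet ν) :
    ∫ x, g x ∂prodM μ σ = ∫ x, g x ∂prodM μ ν := by
  obtain ⟨π, rfl⟩ := mem_labelSet_iff.1 hσ
  rw [← map_permCoords_prodM, (permCoords X π).measurableEmbedding.integral_map]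
  refine integral_congr_ae ?_
  filter_upwards [(prodM_ac_mixM μ (self_mem_labelSet ν)).ae_le (hg π)] with x hx
  simpa using hx

lemma integral_mixM_eq_card_mul [∀ i, SigmaFinite (μ i)] {ν : Fin n → ι}
    {g : (Fin n → X) → ℝ} (hint : Integrable g (mixM μ ν)) (hg : AEPermInvariant (mixM μ ν) g) :
    ∫ x, g x ∂mixM μ ν = (labelSet ν).card * ∫ x, g x ∂prodM μ ν := by
  rw [mixM, integral_finsetSum_measure (integrable_finsetSum_measure.1 hint),
    Finset.sum_congr rfl fun σ hσ => integral_prodM_eq_of_mem_labelSet μ hg hσ,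
    Finset.sum_const, nsmul_eq_mul]

lemma PF_eq_integral [∀ i, SigmaFinite (μ i)] {ν : Fin n → ι} {g : (Fin n → X) → ℝ}
    (hg0 : ∀ x, 0 ≤ g x) (hg : AEPermInvariant (mixM μ ν) g) :
    PF μ ν g = ∫ x, g x ∂prodM μ ν :=
  Real.biSup_finset_eq_of_forall_eq ⟨ν, self_mem_labelSet ν⟩ (integral_nonneg hg0)
    fun _ hσ => integral_prodM_eq_of_mem_labelSet μ hg hσ

lemma PM_eq_one_sub_integral [∀ i, IsProbabilityMeasure (μ i)] {ν : Fin n → ι}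
    {g : (Fin n → X) → ℝ} (hg : IsTest g) (hg_inv : AEPermInvariant (mixM μ ν) g) :
    PM μ ν g = 1 - ∫ x, g x ∂prodM μ ν := by
  have h_inv : AEPermInvariant (mixM μ ν) fun x => 1 - g x := fun π => by
    filter_upwards [hg_inv π] with x hx
    rw [hx]
  change PF μ ν (fun x => 1 - g x) = _
  rw [PF_eq_integral μ (fun x => sub_nonneg.2 (hg.2 x).2) h_inv,
    integral_sub (integrable_const 1) (hg.integrable _)]
  simp

lemma aePermInvariant_rnDeriv_mixM (μ₀ μ₁ : ι → Measure X) [∀ i, IsProbabilityMeasure (μ₀ i)]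
    [∀ i, IsProbabilityMeasure (μ₁ i)] (ν : Fin n → ι) :
    AEPermInvariant (mixM μ₀ ν) ((mixM μ₁ ν).rnDeriv (mixM μ₀ ν)) := fun π => by
  have h := (permCoords X π).measurableEmbedding.rnDeriv_comp_ae_eq_of_map_eq
    (map_permCoords_mixM μ₁ ν π) (map_permCoords_mixM μ₀ ν π)
  simp only [permCoords_apply] at h
  exact h

end Symmetry

theorem mixture_lrt_optimal_among_symmetric
    {X ι : Type*} [MeasurableSpace X]
    (μ₀ μ₁ : ι → Measure X)
    [∀ i, IsProbabilityMeasure (μ₀ i)] [∀ i, IsProbabilityMeasure (μ₁ i)]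
    {n : ℕ} (ν : Fin n → ι)
    (hac : mixM μ₁ ν ≪ mixM μ₀ ν)
    (t : ℝ≥0∞) (γ : ℝ) (hγ0 : 0 ≤ γ) (hγ1 : γ ≤ 1)
    (φ : (Fin n → X) → ℝ)
    (hφ1 : ∀ x, t < (mixM μ₁ ν).rnDeriv (mixM μ₀ ν) x → φ x = 1)
    (hφγ : ∀ x, (mixM μ₁ ν).rnDeriv (mixM μ₀ ν) x = t → φ x = γ)
    (hφ0 : ∀ x, (mixM μ₁ ν).rnDeriv (mixM μ₀ ν) x < t → φ x = 0)
    (ψ : (Fin n → X) → ℝ) (hψmeas : Measurable ψ)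
    (hψ0 : ∀ x, 0 ≤ ψ x) (hψ1 : ∀ x, ψ x ≤ 1)
    (hψsym : ∀ (x : Fin n → X) (τ : Equiv.Perm (Fin n)), ψ (fun j => x (τ j)) = ψ x)
    (hPF : PF μ₀ ν ψ ≤ PF μ₀ ν φ) :
    PM μ₁ ν ψ ≥ PM μ₁ ν φ := by
  have hφ_eq := eq_thresholdTest_comp hφ1 hφγ hφ0
  have hφ : IsTest φ :=
    hφ_eq ▸ isTest_thresholdTest_comp (Measure.measurable_rnDeriv _ _) t ⟨hγ0, hγ1⟩
  have hψ : IsTest ψ := ⟨hψmeas, fun x => ⟨hψ0 x, hψ1 x⟩⟩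
  have hφ_inv₀ : AEPermInvariant (mixM μ₀ ν) φ := fun π => by
    filter_upwards [aePermInvariant_rnDeriv_mixM μ₀ μ₁ ν π] with x hx
    rw [hφ_eq, Function.comp_apply, Function.comp_apply, hx]
  have hφ_inv₁ : AEPermInvariant (mixM μ₁ ν) φ := fun π => hac.ae_le (hφ_inv₀ π)
  have hψ_inv : ∀ Q, AEPermInvariant Q ψ := fun _ π => ae_of_all _ fun x => hψsym x π
  have hcard : (0 : ℝ) < (labelSet ν).card := by
    exact_mod_cast Finset.card_pos.2 ⟨ν, self_mem_labelSet ν⟩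
  have hQ₀ : ∫ x, ψ x ∂mixM μ₀ ν ≤ ∫ x, φ x ∂mixM μ₀ ν := by
    rw [integral_mixM_eq_card_mul μ₀ (hψ.integrable _) (hψ_inv _),
      integral_mixM_eq_card_mul μ₀ (hφ.integrable _) hφ_inv₀,
      ← PF_eq_integral μ₀ hψ0 (hψ_inv _), ← PF_eq_integral μ₀ (fun x => (hφ.2 x).1) hφ_inv₀]
    gcongr
  have hQ₁ := integral_le_integral_of_likelihoodRatio hac hφ hψ hφ1 hφ0 hQ₀
  rw [integral_mixM_eq_card_mul μ₁ (hψ.integrable _) (hψ_inv _),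
    integral_mixM_eq_card_mul μ₁ (hφ.integrable _) hφ_inv₁] at hQ₁
  rw [ge_iff_le, PM_eq_one_sub_integral μ₁ hφ hφ_inv₁, PM_eq_one_sub_integral μ₁ hψ (hψ_inv _)]
  linarith [le_of_mul_le_mul_left hQ₁ hcard]
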